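/- Let G be a benzenoid system with a perfect matching, let Q be an induced convex subgraph of R(G) isomorphic to Q_{k,l} with vertices identified with the tuples (b_1,…,b_{k+l}) (b_i ∈ {0,1} for i ≤ k, b_i ∈ {0,1,2} for i > k, two tuples adjacent iff they differ by exactly 1 in exactly one coordinate). Let M be the all-zero vertex and, for each i ∈ {1,…,k+l}, let N^i be the vertex with 1 in position i and 0 elsewhere, and let h_i be the hexagon of G with M ⊕ N^i = E(h_i). Then the hexagons h_1, …, h_{k+l} are pairwise vertex-disjoint. -/

import Mathlib

open scoped symmDiff

namespace GZZ

/-! ### Cells (hexagonal faces) of the hexagonal lattice in "brick wall" coordinates.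

A vertex of the hexagonal lattice is a pair `(x, y) : ℤ × ℤ`; horizontal edges join
`(x, y)` and `(x + 1, y)`, and vertical edges join `(x, y)` and `(x, y + 1)` for `x + y` even.
The hexagonal faces of the lattice are indexed by their lower-left vertex `c`
(with `c.1 + c.2` even). -/

abbrev V2 := ℤ × ℤ

/-- The six vertices of the hexagonal face with lower-left corner `c`. -/
def cellVerts (c : V2) : Set V2 :=
  {(c.1, c.2), (c.1 + 1, c.2), (c.1 + 2, c.2),
   (c.1, c.2 + 1), (c.1 + 1, c.2 + 1), (c.1 + 2, c.2 + 1)}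

/-- The six edges of the hexagonal face with lower-left corner `c`. -/
def cellEdges (c : V2) : Set (Sym2 V2) :=
  {s((c.1, c.2), (c.1 + 1, c.2)), s((c.1 + 1, c.2), (c.1 + 2, c.2)),
   s((c.1, c.2 + 1), (c.1 + 1, c.2 + 1)), s((c.1 + 1, c.2 + 1), (c.1 + 2, c.2 + 1)),
   s((c.1, c.2), (c.1, c.2 + 1)), s((c.1 + 2, c.2), (c.1 + 2, c.2 + 1))}

/-- Two hexagonal faces are adjacent when they share an edge. -/
def cellAdj (c d : V2) : Prop :=
  (d.1 - c.1, d.2 - c.2) ∈ ({(2, 0), (-2, 0), (1, 1), (1, -1), (-1, 1), (-1, -1)} : Set V2)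

/-- A set of hexagonal faces is connected (via sharing edges). -/
def CellConnected (S : Set V2) : Prop :=
  ∀ c ∈ S, ∀ d ∈ S, Relation.ReflTransGen (fun a b => a ∈ S ∧ b ∈ S ∧ cellAdj a b) c d

/-- A benzenoid system, given by its (finite, nonempty) set `B` of hexagonal faces:
the faces form a connected set and the complement has no holes (it is connected),
which is exactly the condition that `B` consists of all hexagons lying in the region
bounded by a cycle of the hexagonal lattice. -/
def IsBenzenoid (B : Set V2) : Prop :=
  B.Finite ∧ B.Nonempty ∧ (∀ c ∈ B, Even (c.1 + c.2)) ∧ CellConnected B ∧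
    CellConnected {c : V2 | Even (c.1 + c.2) ∧ c ∉ B}

section Generic

/-! ### Perfect matchings, resonance graphs and generalized Clar covers,
generically in a system of hexagonal cells `B` with vertex sets `cv` and edge sets `ce`. -/

variable {V C : Type*} (cv : C → Set V) (ce : C → Set (Sym2 V)) (B : Set C)

/-- The vertices of the system with cell set `B`. -/
def sysVerts : Set V := ⋃ c ∈ B, cv c

/-- The edges of the system with cell set `B`. -/
def sysEdges : Set (Sym2 V) := ⋃ c ∈ B, ce c

/-- A perfect matching: a set of pairwise non-incident edges of the system
covering all vertices of the system. -/
def IsPM (M : Set (Sym2 V)) : Prop :=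
  M ⊆ sysEdges ce B ∧
    (∀ e ∈ M, ∀ f ∈ M, e ≠ f → ∀ v : V, v ∈ e → v ∉ f) ∧
    (∀ v ∈ sysVerts cv B, ∃ e ∈ M, v ∈ e)

/-- The type of perfect matchings of the system. -/
abbrev PM := {M : Set (Sym2 V) // IsPM cv ce B M}

/-- The resonance graph: vertices are the perfect matchings, two perfect matchings
being adjacent whenever their symmetric difference is the edge set of a hexagon. -/
def resGraph : SimpleGraph (PM cv ce B) where
  Adj M N := M ≠ N ∧ ∃ c ∈ B, (M.val ∆ N.val) = ce c
  symm := by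
    constructor
    rintro M N ⟨hne, c, hc, hd⟩
    exact ⟨hne.symm, c, hc, by rwa [symmDiff_comm]⟩
  loopless := ⟨fun M h => h.1 rfl⟩

/-- The connected component (vertex set) of `v` in the spanning subgraph with edge set `E'`. -/
def compSet (E' : Set (Sym2 V)) (v : V) : Set V :=
  {w | (SimpleGraph.fromEdgeSet E').Reachable v w}

/-- The component of `v` in the spanning subgraph with edge set `E'` is a single edge `K₂`. -/
def IsK2Comp (E' : Set (Sym2 V)) (v : V) : Prop :=
  ∃ u w : V, u ≠ w ∧ s(u, w) ∈ E' ∧ compSet E' v = {u, w}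

/-- The component of `v` in the spanning subgraph with edge set `E'` is a cycle `Cₙ`. -/
def IsCycComp (n : ℕ) [NeZero n] (E' : Set (Sym2 V)) (v : V) : Prop :=
  ∃ c : ZMod n → V, Function.Injective c ∧ compSet E' v = Set.range c ∧
    (∀ i : ZMod n, s(c i, c (i + 1)) ∈ E') ∧
    (∀ e ∈ E', (∀ u, u ∈ e → u ∈ Set.range c) → ∃ i : ZMod n, e = s(c i, c (i + 1)))

/-- The number of `Cₙ`-components of the spanning subgraph with edge set `E'`. -/
noncomputable def numCyc (n : ℕ) [NeZero n] (Vs : Set V) (E' : Set (Sym2 V)) : ℕ :=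
  Set.ncard {S : Set V | ∃ v ∈ Vs, IsCycComp n E' v ∧ S = compSet E' v}

/-- A generalized Clar cover: a spanning subgraph (given by its edge set `E'`) of the
system each of whose connected components is a `C₆`, a `C₁₀` or a `K₂`. -/
def IsGenClarCover (E' : Set (Sym2 V)) : Prop :=
  E' ⊆ sysEdges ce B ∧
    ∀ v ∈ sysVerts cv B, IsK2Comp E' v ∨ IsCycComp 6 E' v ∨ IsCycComp 10 E' v

/-- `gz B k l`: the number of generalized Clar covers with exactly `k` components `C₆`
and `l` components `C₁₀`. -/
noncomputable def gz (k l : ℕ) : ℕ :=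
  Set.ncard {E' : Set (Sym2 V) | IsGenClarCover cv ce B E' ∧
    numCyc 6 (sysVerts cv B) E' = k ∧ numCyc 10 (sysVerts cv B) E' = l}

/-- The set of vertices of the resonance graph assigned by the map `f_{k,l}` to a
generalized Clar cover `E'`: all perfect matchings `M` such that `|M ∩ E(c)| = 3` for every
`C₆`-component (a hexagon) `c` of `E'`, `|M ∩ (E(h₁) ∪ E(h₂))| = 5` for every
`C₁₀`-component of `E'` formed by two hexagons `h₁, h₂`, and every `K₂`-component edge
of `E'` belongs to `M`. -/
def fSet (E' : Set (Sym2 V)) : Set (PM cv ce B) :=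
  {M | (∀ v ∈ sysVerts cv B, IsCycComp 6 E' v → ∀ h ∈ B, compSet E' v = cv h →
          Set.ncard (M.val ∩ ce h) = 3) ∧
       (∀ v ∈ sysVerts cv B, IsCycComp 10 E' v → ∀ h₁ ∈ B, ∀ h₂ ∈ B, h₁ ≠ h₂ →
          compSet E' v = cv h₁ ∪ cv h₂ →
          Set.ncard (M.val ∩ (ce h₁ ∪ ce h₂)) = 5) ∧
       (∀ u w : V, s(u, w) ∈ E' → compSet E' u = {u, w} → s(u, w) ∈ M.val)}

end Generic

/-! ### The graphs `Q_{k,l}` and the generalized cube polynomial. -/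

/-- The Cartesian (box) product of `n` copies of a graph `G`. -/
def boxPow {α : Type*} (G : SimpleGraph α) : (n : ℕ) → SimpleGraph (Fin n → α)
  | 0 => ⊥
  | n + 1 =>
    SimpleGraph.comap (fun f => (fun i => f i.castSucc, f (Fin.last n)))
      ((boxPow G n).boxProd G)

/-- The graph `Q_{k,l} = P₂^k □ P₃^l`. -/
def QGraph (k l : ℕ) : SimpleGraph ((Fin k → Fin 2) × (Fin l → Fin 3)) :=
  (boxPow (SimpleGraph.pathGraph 2) k).boxProd (boxPow (SimpleGraph.pathGraph 3) l)

/-- A set of vertices is convex if every shortest path between two of its vertices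
stays inside it. -/
def IsConvex {W : Type*} (G : SimpleGraph W) (S : Set W) : Prop :=
  ∀ u v : W, u ∈ S → v ∈ S → ∀ p : G.Walk u v, p.IsPath → p.length = G.dist u v →
    ∀ w ∈ p.support, w ∈ S

/-- `alphaQ G k l`: the number of induced convex subgraphs of `G` isomorphic to `Q_{k,l}`. -/
noncomputable def alphaQ {W : Type*} (G : SimpleGraph W) (k l : ℕ) : ℕ :=
  Set.ncard {S : Set W | IsConvex G S ∧ Nonempty (G.induce S ≃g QGraph k l)}

end GZZ
namespace GZZ

/-- The "tuple" description of `Q_{k,l}`: vertices are tuples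
`(b₁, …, b_k, b_{k+1}, …, b_{k+l})` with `bᵢ ∈ {0,1}` for `i ≤ k` and `bᵢ ∈ {0,1,2}` for
`i > k`, two tuples being adjacent iff they differ by exactly `1` in exactly one
coordinate. -/
def tupleGraph (k l : ℕ) : SimpleGraph ((Fin k → Fin 2) × (Fin l → Fin 3)) where
  Adj p q :=
    (∃ i : Fin k, ((p.1 i : ℕ) = (q.1 i : ℕ) + 1 ∨ (q.1 i : ℕ) = (p.1 i : ℕ) + 1) ∧
      (∀ j : Fin k, j ≠ i → p.1 j = q.1 j) ∧ p.2 = q.2) ∨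
    (∃ i : Fin l, ((p.2 i : ℕ) = (q.2 i : ℕ) + 1 ∨ (q.2 i : ℕ) = (p.2 i : ℕ) + 1) ∧
      (∀ j : Fin l, j ≠ i → p.2 j = q.2 j) ∧ p.1 = q.1)
  symm := by
    constructor
    rintro p q (⟨i, hd, hj, h2⟩ | ⟨i, hd, hj, h2⟩)
    · exact Or.inl ⟨i, hd.symm, fun j hji => (hj j hji).symm, h2.symm⟩
    · exact Or.inr ⟨i, hd.symm, fun j hji => (hj j hji).symm, h2.symm⟩
  loopless := by
    constructor
    rintro p (⟨i, hd, -, -⟩ | ⟨i, hd, -, -⟩) <;> omega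

end GZZ
namespace GZZ

/-!
For `i ≠ j` the tuples `0, Nⁱ, Nⁱ + Nʲ, Nʲ` form a 4-cycle of `Q_{k,l}`, so `M = φ 0` lies on a
4-cycle `M Nⁱ P Nʲ` of the resonance graph whose edges are labelled by hexagons `hᵢ, c, c', hⱼ`.
Distinct hexagons share at most one edge, and if `hᵢ` and `hⱼ` had a common vertex `v`, the edge
of `M` at `v` would be their common edge. Now `c ≠ hᵢ` (as `M ≠ P`) and `c ≠ c'` (as
`Nⁱ ≠ Nʲ`). If `c = hⱼ`, the edge of `Nⁱ` at `v` is that common edge too, contradicting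
`M ∆ Nⁱ = E(hᵢ)`. Otherwise `E(c) ∆ E(c') = Nⁱ ∆ Nʲ = E(hᵢ) ∆ E(hⱼ)` puts the six edges of `c`
into `E(c') ∪ E(hᵢ) ∪ E(hⱼ)`, at most one in each.
-/

section Matching

variable {V C : Type*} {cv : C → Set V} {ce : C → Set (Sym2 V)} {B : Set C}

theorem IsPM.eq_of_mem {M : Set (Sym2 V)} (hM : IsPM cv ce B M) {e f : Sym2 V} (he : e ∈ M)
    (hf : f ∈ M) {v : V} (hve : v ∈ e) (hvf : v ∈ f) : e = f :=
  by_contra fun hef => hM.2.1 e he f hf hef v hve hvf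

theorem IsPM.mem_symmDiff_of_mem {M N : Set (Sym2 V)} (hM : IsPM cv ce B M)
    (hN : IsPM cv ce B N) {g e : Sym2 V} {v : V} (hg : g ∈ M ∆ N) (hvg : v ∈ g) (he : e ∈ M)
    (hve : v ∈ e) : e ∈ M ∆ N := by
  rcases Set.mem_symmDiff.1 hg with ⟨hgM, -⟩ | ⟨hgN, hgM⟩
  · rwa [hM.eq_of_mem he hgM hve hvg]
  · refine Set.mem_symmDiff.2 (Or.inl ⟨he, fun heN => hgM ?_⟩)
    rwa [← hN.eq_of_mem heN hgN hve hvg]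

end Matching

section Cells

theorem mem_cellVerts_iff {v c : V2} :
    v ∈ cellVerts c ↔ c.1 ≤ v.1 ∧ v.1 ≤ c.1 + 2 ∧ (v.2 = c.2 ∨ v.2 = c.2 + 1) := by
  simp only [cellVerts, Set.mem_insert_iff, Set.mem_singleton_iff, Prod.ext_iff]
  omega

theorem exists_mem_cellEdges_of_mem_cellVerts {v c : V2} (hv : v ∈ cellVerts c) :
    ∃ g ∈ cellEdges c, v ∈ g := by
  simp only [cellVerts, Set.mem_insert_iff, Set.mem_singleton_iff] at hv
  rcases hv with rfl | rfl | rfl | rfl | rfl | rfl <;> simp [cellEdges]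

theorem mem_cellVerts_of_mem_cellEdges {e : Sym2 V2} {c v : V2} (he : e ∈ cellEdges c)
    (hv : v ∈ e) : v ∈ cellVerts c := by
  simp only [cellEdges, Set.mem_insert_iff, Set.mem_singleton_iff] at he
  rcases he with rfl | rfl | rfl | rfl | rfl | rfl <;>
    rcases Sym2.mem_iff.1 hv with rfl | rfl <;> simp [cellVerts]

theorem not_isDiag_of_mem_cellEdges {e : Sym2 V2} {c : V2} (he : e ∈ cellEdges c) :
    ¬e.IsDiag := by
  simp only [cellEdges, Set.mem_insert_iff, Set.mem_singleton_iff] at he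
  rcases he with rfl | rfl | rfl | rfl | rfl | rfl <;> simp [Prod.ext_iff]

theorem encard_cellEdges (c : V2) : (cellEdges c).encard = 6 := by
  simp [cellEdges, Set.encard_insert_of_notMem, Prod.ext_iff]
  norm_num

theorem eq_or_eq_or_eq_of_mem_cellVerts_inter {c d : V2} (hc : Even (c.1 + c.2))
    (hd : Even (d.1 + d.2)) (hcd : c ≠ d) {x y z : V2} (hx : x ∈ cellVerts c ∩ cellVerts d)
    (hy : y ∈ cellVerts c ∩ cellVerts d) (hz : z ∈ cellVerts c ∩ cellVerts d) :
    x = y ∨ x = z ∨ y = z := by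
  obtain ⟨m, hm⟩ := hc
  obtain ⟨n, hn⟩ := hd
  rw [Ne, Prod.ext_iff] at hcd
  simp only [Set.mem_inter_iff, mem_cellVerts_iff] at hx hy hz
  simp only [Prod.ext_iff]
  omega

/-- A set with at most two elements contains at most one non-diagonal edge. -/
theorem _root_.Sym2.eq_of_forall_mem {α : Type*} {T : Set α}
    (hT : ∀ x ∈ T, ∀ y ∈ T, ∀ z ∈ T, x = y ∨ x = z ∨ y = z) {e f : Sym2 α} (he : ¬e.IsDiag)
    (hf : ¬f.IsDiag) (heT : ∀ v ∈ e, v ∈ T) (hfT : ∀ v ∈ f, v ∈ T) : e = f := by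
  induction e using Sym2.ind with | _ u w => ?_
  induction f using Sym2.ind with | _ u' w' => ?_
  simp only [Sym2.mk_isDiag_iff, Sym2.mem_iff, forall_eq_or_imp, forall_eq] at he hf heT hfT
  rw [Sym2.eq_iff]
  rcases hT u heT.1 w heT.2 u' hfT.1 with h | h | h <;>
    rcases hT u heT.1 w heT.2 w' hfT.2 with h' | h' | h' <;>
    subst_vars <;> simp_all

theorem cellEdges_inter_subsingleton {c d : V2} (hc : Even (c.1 + c.2))
    (hd : Even (d.1 + d.2)) (hcd : c ≠ d) : (cellEdges c ∩ cellEdges d).Subsingleton := by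
  have hV : ∀ e ∈ cellEdges c ∩ cellEdges d, ∀ v ∈ e, v ∈ cellVerts c ∩ cellVerts d :=
    fun e he v hv => ⟨mem_cellVerts_of_mem_cellEdges he.1 hv,
      mem_cellVerts_of_mem_cellEdges he.2 hv⟩
  intro e he f hf
  exact Sym2.eq_of_forall_mem (fun x hx y hy z hz => eq_or_eq_or_eq_of_mem_cellVerts_inter
    hc hd hcd hx hy hz) (not_isDiag_of_mem_cellEdges he.1) (not_isDiag_of_mem_cellEdges hf.1)
    (hV e he) (hV f hf)

theorem not_cellEdges_subset_union {c d₁ d₂ d₃ : V2} (hc : Even (c.1 + c.2))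
    (hd₁ : Even (d₁.1 + d₁.2)) (hd₂ : Even (d₂.1 + d₂.2)) (hd₃ : Even (d₃.1 + d₃.2))
    (h₁ : c ≠ d₁) (h₂ : c ≠ d₂) (h₃ : c ≠ d₃) :
    ¬cellEdges c ⊆ cellEdges d₁ ∪ cellEdges d₂ ∪ cellEdges d₃ := by
  intro hsub
  have hsplit : cellEdges c = (cellEdges c ∩ cellEdges d₁) ∪ (cellEdges c ∩ cellEdges d₂) ∪
      (cellEdges c ∩ cellEdges d₃) := by
    rw [← Set.inter_union_distrib_left, ← Set.inter_union_distrib_left,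
      Set.inter_eq_left.2 hsub]
  have hle : (cellEdges c).encard ≤ 1 + 1 + 1 := by
    rw [hsplit]
    refine (Set.encard_union_le _ _).trans (add_le_add ((Set.encard_union_le _ _).trans
      (add_le_add ?_ ?_)) ?_) <;> rw [Set.encard_le_one_iff_subsingleton]
    exacts [cellEdges_inter_subsingleton hc hd₁ h₁, cellEdges_inter_subsingleton hc hd₂ h₂,
      cellEdges_inter_subsingleton hc hd₃ h₃]
  rw [encard_cellEdges] at hle
  norm_num at hle

end Cells

section Resonance

variable {B : Set V2}

theorem mem_cellEdges_of_symmDiff_eq {M N : PM cellVerts cellEdges B} {x v : V2} {e : Sym2 V2}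
    (hMN : M.val ∆ N.val = cellEdges x) (hv : v ∈ cellVerts x) (he : e ∈ M.val) (hve : v ∈ e) :
    e ∈ cellEdges x := by
  obtain ⟨g, hg, hvg⟩ := exists_mem_cellEdges_of_mem_cellVerts hv
  rw [← hMN] at hg ⊢
  exact M.prop.mem_symmDiff_of_mem N.prop hg hvg he hve

theorem disjoint_cellVerts_of_twist (hB : ∀ c ∈ B, Even (c.1 + c.2))
    {M N N' N'' : PM cellVerts cellEdges B} {x y : V2} (hxB : x ∈ B) (hyB : y ∈ B)
    (hMN : M.val ∆ N.val = cellEdges x) (hMN' : M.val ∆ N'.val = cellEdges y)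
    (hNN'' : N.val ∆ N''.val = cellEdges y) (hxy : x ≠ y) :
    Disjoint (cellVerts x) (cellVerts y) := by
  refine Set.disjoint_left.2 fun v hvx hvy => ?_
  have hv : v ∈ sysVerts cellVerts B := Set.mem_biUnion hxB hvx
  obtain ⟨a, haM, hva⟩ := M.prop.2.2 v hv
  obtain ⟨f, hfN, hvf⟩ := N.prop.2.2 v hv
  have hNM : N.val ∆ M.val = cellEdges x := by rwa [symmDiff_comm]
  have haf : a = f := cellEdges_inter_subsingleton (hB x hxB) (hB y hyB) hxy
    ⟨mem_cellEdges_of_symmDiff_eq hMN hvx haM hva, mem_cellEdges_of_symmDiff_eq hMN' hvy haM hva⟩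
    ⟨mem_cellEdges_of_symmDiff_eq hNM hvx hfN hvf, mem_cellEdges_of_symmDiff_eq hNN'' hvy hfN hvf⟩
  have ha : a ∈ M.val ∆ N.val := hMN ▸ mem_cellEdges_of_symmDiff_eq hMN hvx haM hva
  exact (Set.mem_symmDiff.1 ha).elim (fun h => h.2 (haf ▸ hfN)) fun h => h.2 haM

theorem disjoint_cellVerts_of_square (hB : ∀ c ∈ B, Even (c.1 + c.2))
    {M₀ Mᵢ Mⱼ M₂ : PM cellVerts cellEdges B} {hᵢ hⱼ : V2} (hᵢB : hᵢ ∈ B) (hⱼB : hⱼ ∈ B)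
    (h₀ᵢ : M₀.val ∆ Mᵢ.val = cellEdges hᵢ) (h₀ⱼ : M₀.val ∆ Mⱼ.val = cellEdges hⱼ)
    (hᵢ₂ : (resGraph cellVerts cellEdges B).Adj Mᵢ M₂)
    (hⱼ₂ : (resGraph cellVerts cellEdges B).Adj Mⱼ M₂) (h₀₂ : M₀ ≠ M₂) (hᵢⱼ : Mᵢ ≠ Mⱼ) :
    Disjoint (cellVerts hᵢ) (cellVerts hⱼ) := by
  obtain ⟨-, c, hcB, hc⟩ := hᵢ₂
  obtain ⟨-, c', hc'B, hc'⟩ := hⱼ₂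
  have hne : hᵢ ≠ hⱼ := by
    rintro rfl
    exact hᵢⱼ (Subtype.ext (symmDiff_right_inj.1 (h₀ᵢ.trans h₀ⱼ.symm)))
  have hcᵢ : c ≠ hᵢ := by
    rintro rfl
    rw [symmDiff_comm] at h₀ᵢ
    exact h₀₂ (Subtype.ext (symmDiff_right_inj.1 (h₀ᵢ.trans hc.symm)))
  have hcc' : c ≠ c' := by
    rintro rfl
    exact hᵢⱼ (Subtype.ext (symmDiff_left_inj.1 (hc.trans hc'.symm)))
  by_cases hcⱼ : c = hⱼ
  · subst hcⱼ
    exact disjoint_cellVerts_of_twist hB hᵢB hⱼB h₀ᵢ h₀ⱼ hc hne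
  have hsymm : cellEdges c ∆ cellEdges c' = cellEdges hᵢ ∆ cellEdges hⱼ := by
    rw [← hc, ← hc', ← h₀ᵢ, ← h₀ⱼ, symmDiff_symmDiff_symmDiff_comm Mᵢ.val,
      symmDiff_symmDiff_symmDiff_comm M₀.val, symmDiff_self, symmDiff_self, symmDiff_bot,
      bot_symmDiff]
  refine absurd ?_ (not_cellEdges_subset_union (hB c hcB) (hB c' hc'B) (hB hᵢ hᵢB)
    (hB hⱼ hⱼB) hcc' hcᵢ hcⱼ)
  calc cellEdges c ⊆ cellEdges c ∆ cellEdges c' ∪ cellEdges c' := le_symmDiff_sup_right _ _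
    _ ⊆ cellEdges c' ∪ cellEdges hᵢ ∪ cellEdges hⱼ := by
      rw [hsymm, Set.union_comm, Set.union_assoc]
      exact Set.union_subset_union_right _ symmDiff_le_sup

end Resonance

section Tuples

variable {k l : ℕ}

/-- The tuple `(b₁, …, b_{k+l})` as a function on the coordinates `Fin k ⊕ Fin l`. -/
def tupleCoord (p : (Fin k → Fin 2) × (Fin l → Fin 3)) : Fin k ⊕ Fin l → ℕ :=
  Sum.elim (fun i => p.1 i) (fun i => p.2 i)

theorem tupleGraph_adj_of_tupleCoord {p q : (Fin k → Fin 2) × (Fin l → Fin 3)}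
    {i : Fin k ⊕ Fin l} (hi : tupleCoord q i = tupleCoord p i + 1)
    (hother : ∀ j, j ≠ i → tupleCoord p j = tupleCoord q j) : (tupleGraph k l).Adj p q := by
  cases i with
  | inl i =>
    exact Or.inl ⟨i, Or.inr hi, fun j hj => Fin.ext (hother (.inl j) (by simpa)),
      funext fun j => Fin.ext (hother (.inr j) (by simp))⟩
  | inr i =>
    exact Or.inr ⟨i, Or.inr hi, fun j hj => Fin.ext (hother (.inr j) (by simpa)),
      funext fun j => Fin.ext (hother (.inl j) (by simp))⟩

theorem exists_tupleGraph_adj_unit {N : Fin k ⊕ Fin l → (Fin k → Fin 2) × (Fin l → Fin 3)}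
    (hN : ∀ m n, tupleCoord (N m) n = if n = m then 1 else 0) {i j : Fin k ⊕ Fin l}
    (hij : i ≠ j) :
    ∃ P, tupleCoord P i = 1 ∧ (tupleGraph k l).Adj (N i) P ∧ (tupleGraph k l).Adj (N j) P := by
  let P : (Fin k → Fin 2) × (Fin l → Fin 3) :=
    (fun t => if .inl t = i ∨ .inl t = j then 1 else 0,
      fun t => if .inr t = i ∨ .inr t = j then 1 else 0)
  have hP : ∀ n, tupleCoord P n = if n = i ∨ n = j then 1 else 0 := by
    rintro (n | n) <;> simp only [P, tupleCoord, Sum.elim_inl, Sum.elim_inr] <;> split_ifs <;> rfl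
  refine ⟨P, by simp [hP], tupleGraph_adj_of_tupleCoord (i := j) ?_ ?_,
    tupleGraph_adj_of_tupleCoord (i := i) ?_ ?_⟩ <;> grind

end Tuples

theorem hexagons_pairwise_disjoint_general (B : Set V2) (hB : IsBenzenoid B) (k l : ℕ)
    (S : Set (PM cellVerts cellEdges B))
    (φ : tupleGraph k l ≃g (resGraph cellVerts cellEdges B).induce S)
    (N : Fin k ⊕ Fin l → (Fin k → Fin 2) × (Fin l → Fin 3))
    (hNk : ∀ i : Fin k, N (Sum.inl i) = (fun j => if j = i then 1 else 0, fun _ => 0))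
    (hNl : ∀ i : Fin l, N (Sum.inr i) = (fun _ => 0, fun j => if j = i then 1 else 0))
    (h : Fin k ⊕ Fin l → V2) (hhB : ∀ i, h i ∈ B)
    (hhex : ∀ i, (φ (fun _ => 0, fun _ => 0)).val.val ∆ (φ (N i)).val.val = cellEdges (h i)) :
    ∀ i j, i ≠ j → cellVerts (h i) ∩ cellVerts (h j) = ∅ := by
  intro i j hij
  have hN : ∀ m n, tupleCoord (N m) n = if n = m then 1 else 0 := by
    rintro (m | m) (n | n) <;> simp [tupleCoord, hNk, hNl, apply_ite Fin.val]
  obtain ⟨P, hPi, hiP, hjP⟩ := exists_tupleGraph_adj_unit hN hij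
  have hφ : ∀ {p q}, (φ p).val = (φ q).val → p = q := fun e => φ.injective (Subtype.ext e)
  rw [← Set.disjoint_iff_inter_eq_empty]
  refine disjoint_cellVerts_of_square hB.2.2.1 (hhB i) (hhB j) (hhex i) (hhex j)
    (φ.map_adj_iff.2 hiP) (φ.map_adj_iff.2 hjP) (fun heq => ?_) (fun heq => ?_)
  · simp [← hφ heq, tupleCoord] at hPi
  · simpa [hN, hij] using congrArg (tupleCoord · i) (hφ heq)

/-- **Claim 1.** Let `Q` be an induced convex subgraph of the resonance graph
of a benzenoid system `G`, isomorphic to `Q_{k,l}` with vertices identified with tuples.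
Let `M` be the all-zero vertex, `Nⁱ` the vertex with `1` in position `i` and `0` elsewhere,
and `hᵢ` the hexagon of `G` with `M ⊕ Nⁱ = E(hᵢ)`. Then the hexagons `h₁, …, h_{k+l}` are
pairwise vertex-disjoint. -/
theorem hexagons_pairwise_disjoint (B : Set V2) (hB : IsBenzenoid B)
    (hex : ∃ M, IsPM cellVerts cellEdges B M) (k l : ℕ)
    (S : Set (PM cellVerts cellEdges B))
    (hconv : IsConvex (resGraph cellVerts cellEdges B) S)
    (φ : tupleGraph k l ≃g (resGraph cellVerts cellEdges B).induce S)
    (N : Fin k ⊕ Fin l → (Fin k → Fin 2) × (Fin l → Fin 3))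
    (hNk : ∀ i : Fin k, N (Sum.inl i) = (fun j => if j = i then 1 else 0, fun _ => 0))
    (hNl : ∀ i : Fin l, N (Sum.inr i) = (fun _ => 0, fun j => if j = i then 1 else 0))
    (h : Fin k ⊕ Fin l → V2) (hhB : ∀ i, h i ∈ B)
    (hhex : ∀ i, (φ (fun _ => 0, fun _ => 0)).val.val ∆ (φ (N i)).val.val = cellEdges (h i)) :
    ∀ i j, i ≠ j → cellVerts (h i) ∩ cellVerts (h j) = ∅ :=
  hexagons_pairwise_disjoint_general B hB k l S φ N hNk hNl h hhB hhex

end GZZ
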